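/- arXiv:1107.0405 — 4 statements merged into one kernel-verified Lean document; each statement's English description precedes it below -/
import Mathlib

section
/- Let c ≥ 0 satisfy cosh(2c) ≤ 2. Then the function x ↦ (tanh(x+c) + tanh(x−c))/x is monotone nonincreasing on (0,∞). Consequently, for any T > 0 and δ ≥ 0 with cosh(δ/T) ≤ 2 and any p ∈ ℝ³, the map x ↦ K^x_{T,δ}(p) is nondecreasing on [0,∞), and hence inf_{x>0} K^x_{T,δ}(p) = K⁰_{T,δ}(p). -/
open MeasureTheory Filter
open scoped RealInnerProductSpace ENNReal Topology

noncomputable section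

/-- Momentum/position space `ℝ³`. -/
abbrev R3 : Type := EuclideanSpace ℝ (Fin 3)

/-- Fourier transform with the `(2π)^{-3/2}` convention. -/
def ftr (f : R3 → ℂ) (p : R3) : ℂ :=
  (((2 * Real.pi) ^ (-(3:ℝ)/2) : ℝ) : ℂ) *
    ∫ x : R3, Complex.exp (-Complex.I * ((⟪p, x⟫ : ℝ) : ℂ)) * f x

/-- Convolution with the `(2π)^{-3/2}` convention. -/
def convol (f g : R3 → ℂ) (p : R3) : ℂ :=
  (((2 * Real.pi) ^ (-(3:ℝ)/2) : ℝ) : ℂ) * ∫ q : R3, f (p - q) * g q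

/-- Fourier transform of a real-valued potential. -/
def Vhat (V : R3 → ℝ) : R3 → ℂ := ftr (fun x => (V x : ℂ))

/-- The dispersion `E_x(p) = √((|p|²-μ)² + x²)`. -/
def EE (μ x : ℝ) (p : R3) : ℝ := Real.sqrt ((‖p‖^2 - μ)^2 + x^2)

/-- The symbol `K^x_{T,δ}(p)`, continuously extended where `E_x(p)=0`. -/
def Kx (μ T δ x : ℝ) (p : R3) : ℝ :=
  if EE μ x p = 0 then 2 * T * (Real.cosh (δ / (2*T)))^2
  else 2 * EE μ x p /
    (Real.tanh ((EE μ x p + δ)/(2*T)) + Real.tanh ((EE μ x p - δ)/(2*T)))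

/-- `K^Δ_{T,δ}(p) = K^{|Δ(p)|}_{T,δ}(p)` for `Δ : ℝ³ → ℂ`. -/
def KDel (μ T δ : ℝ) (Δ : R3 → ℂ) (p : R3) : ℝ := Kx μ T δ (‖Δ p‖) p

/-- `K̃_{T,δ}(p) = inf_{x>0} K^x_{T,δ}(p)`. -/
def Ktil (μ T δ : ℝ) (p : R3) : ℝ := ⨅ x : {x : ℝ // 0 < x}, Kx μ T δ x.1 p

/-- `a ln a`, with the convention `0 ln 0 = 0` (since `Real.log 0 = 0`). -/
def ent (a : ℝ) : ℝ := a * Real.log a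

def rP (γp γm : R3 → ℝ) (p : R3) : ℝ := (1 + γp p - γm p)/2
def sP (γp γm : R3 → ℝ) (p : R3) : ℝ := (1 - γp p + γm p)/2
def wP (γp γm : R3 → ℝ) (α : R3 → ℂ) (p : R3) : ℝ :=
  Real.sqrt ((1 - γp p - γm p)^2 + 4 * ‖ftr α p‖^2) / 2

/-- The admissible set `D` of BCS states. -/
structure InD (γp γm : R3 → ℝ) (α : R3 → ℂ) : Prop where
  measp : Measurable γp
  measm : Measurable γm
  boundp : ∀ᵐ p : R3, 0 ≤ γp p ∧ γp p ≤ 1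
  boundm : ∀ᵐ p : R3, 0 ≤ γm p ∧ γm p ≤ 1
  intp : Integrable (fun p : R3 => (1 + ‖p‖^2) * γp p)
  intm : Integrable (fun p : R3 => (1 + ‖p‖^2) * γm p)
  memα : MemLp α 2 (volume : Measure R3)
  inthat : Integrable (fun p : R3 => (1 + ‖p‖^2) * ‖ftr α p‖^2)
  cons1 : ∀ᵐ p : R3, ‖ftr α p‖^2 ≤ γp p * (1 - γm p)
  cons2 : ∀ᵐ p : R3, ‖ftr α p‖^2 ≤ γm p * (1 - γp p)

/-- The BCS free energy functional `F_T`. -/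
def FBCS (μp μm T lam : ℝ) (V : R3 → ℝ) (γp γm : R3 → ℝ) (α : R3 → ℂ) : ℝ :=
  (1/2) * ∫ p : R3, (‖p‖^2 - μp) * γp p
  + (1/2) * ∫ p : R3, (‖p‖^2 - μm) * γm p
  + lam * ∫ x : R3, V x * ‖α x‖^2
  + (T/2) * ∫ p : R3,
      (ent (rP γp γm p + wP γp γm α p) + ent (rP γp γm p - wP γp γm α p)
       + ent (sP γp γm p + wP γp γm α p) + ent (sP γp γm p - wP γp γm α p))

/-- The quadratic form `ψ ↦ ∫ W |ψ̂|² + λ ∫ V |ψ|²`. -/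
def quadForm (W : R3 → ℝ) (lam : ℝ) (V : R3 → ℝ) (ψ : R3 → ℂ) : ℝ :=
  (∫ p : R3, W p * ‖ftr ψ p‖^2) + lam * ∫ x : R3, V x * ‖ψ x‖^2

/-- Smooth compactly supported functions. -/
def IsCinfc (ψ : R3 → ℂ) : Prop := ContDiff ℝ (⊤ : ℕ∞) ψ ∧ HasCompactSupport ψ

/-- A (non-trivial) solution of the BCS gap equation at `(T, δ)`. -/
def GapSolution (μ T δ lam : ℝ) (V : R3 → ℝ) (Δ : R3 → ℂ) (α : R3 → ℂ) : Prop :=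
  Measurable Δ ∧ ¬ (Δ =ᵐ[(volume : Measure R3)] 0) ∧ MemLp α 2 (volume : Measure R3) ∧
  (ftr α =ᵐ[(volume : Measure R3)] fun p => Δ p / ((KDel μ T δ Δ p : ℝ) : ℂ)) ∧
  (Δ =ᵐ[(volume : Measure R3)] fun p => -(lam : ℂ) * convol (Vhat V) (ftr α) p)

/-- The Fermi sphere `Ω = {p : |p|² = μ}`. -/
def sphOmega (μ : ℝ) : Set R3 := Metric.sphere (0 : R3) (Real.sqrt μ)

/-- Surface measure on the Fermi sphere (2-dimensional Hausdorff measure). -/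
def sphMeas (μ : ℝ) : Measure R3 := (μH[2] : Measure R3).restrict (sphOmega μ)

/-- Surface measure on the unit sphere. -/
def unitSph : Measure R3 := (μH[2] : Measure R3).restrict (Metric.sphere (0 : R3) 1)

/-- `φ_u(p) = (2π)^{-3/2} ∫_Ω V̂(p-q) u(q) dω(q)`. -/
def phiu (μ : ℝ) (V : R3 → ℝ) (u : R3 → ℂ) (p : R3) : ℂ :=
  (((2 * Real.pi) ^ (-(3:ℝ)/2) : ℝ) : ℂ) * ∫ q, Vhat V (p - q) * u q ∂ (sphMeas μ)

/-- The quadratic form of the operator `𝒱_μ` on `L²(Ω)`. -/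
def qV (μ : ℝ) (V : R3 → ℝ) (u : R3 → ℂ) : ℝ :=
  ((((Real.sqrt μ)⁻¹ : ℝ) : ℂ) *
    ∫ p, phiu μ V u p * (starRingEnd ℂ) (u p) ∂ (sphMeas μ)).re

/-- The quadratic form of the operator `𝒲_μ` on `L²(Ω)`, radial integral with the angular
integration performed first. -/
def qW (μ : ℝ) (V : R3 → ℝ) (u : R3 → ℂ) : ℝ :=
  ∫ r in Set.Ioi (0:ℝ),
    r^2 * ∫ ω, ((‖phiu μ V u (r • ω)‖^2
        - ‖phiu μ V u ((Real.sqrt μ) • ω)‖^2) / |r^2 - μ|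
      + ‖phiu μ V u ((Real.sqrt μ) • ω)‖^2 / r^2) ∂ unitSph

/-- `e_μ = inf spec 𝒱_μ`. -/
def eMu (μ : ℝ) (V : R3 → ℝ) : ℝ :=
  sInf {e : ℝ | ∃ u : R3 → ℂ, (∫ p, ‖u p‖^2 ∂ (sphMeas μ)) = 1 ∧ e = qV μ V u}

/-- `ρ(λ) = inf spec (λ (π/2√μ) 𝒱_μ - λ² (π/2μ) 𝒲_μ)`. -/
def rho (μ : ℝ) (V : R3 → ℝ) (lam : ℝ) : ℝ :=
  sInf {e : ℝ | ∃ u : R3 → ℂ, (∫ p, ‖u p‖^2 ∂ (sphMeas μ)) = 1 ∧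
    e = lam * (Real.pi/(2*Real.sqrt μ)) * qV μ V u - lam^2 * (Real.pi/(2*μ)) * qW μ V u}

/-- The function `κⁱ`. -/
def kappaI (t : ℝ) : ℝ :=
  (1 + Real.exp t)⁻¹ * (∫ x in Set.Ioi (0:ℝ), (1 - Real.exp (-x)) / (x * (1 + Real.exp (x + t))))
  + (1 + Real.exp (-t))⁻¹ * (∫ x in Set.Ioi (0:ℝ), (1 - Real.exp (-x)) / (x * (1 + Real.exp (x - t))))
  - Real.log (Real.pi / 2)

/-- `f(x,c) = x/(tanh((x+c)/2) + tanh((x-c)/2))`, extended continuously at `x = 0`. -/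
def ff (c x : ℝ) : ℝ :=
  if x = 0 then (Real.cosh (c/2))^2
  else x / (Real.tanh ((x + c)/2) + Real.tanh ((x - c)/2))

/-- The function `κᵒ`, with the minimizing point `b = b(c)` given as a parameter. -/
def kappaO (b c : ℝ) : ℝ :=
  (1 + Real.exp c)⁻¹ * (∫ x in Set.Ioi b, (1 - Real.exp (-x)) / (x * (1 + Real.exp (x + c))))
  + (1 + Real.exp (-c))⁻¹ * (∫ x in Set.Ioi b, (1 - Real.exp (-x)) / (x * (1 + Real.exp (x - c))))
  + (if b = 0 then 0 else (1 - Real.exp (-b)) * Real.log b)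
  - (∫ x in Set.Ioo (0:ℝ) b, Real.exp (-x) * Real.log x)
  - b / (2 * ff c b)
  - Real.log (Real.pi / 2)

/-- The function `ζ(t,d)`. -/
def zeta (t d : ℝ) : ℝ :=
  - (∫ x in Set.Ioo (0:ℝ) d, Real.exp (-x) * Real.log (x / d))
  + (∫ x in Set.Ioi d, Real.exp (-x) * Real.log (1 + Real.sqrt (1 - (d/x)^2)))
  + (1 + Real.exp t)⁻¹ *
      (∫ x in Set.Ioi d, (1 - Real.exp (-x)) / ((1 + Real.exp (x + t)) * Real.sqrt (x^2 - d^2)))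
  + (1 + Real.exp (-t))⁻¹ *
      (∫ x in Set.Ioi d, (1 - Real.exp (-x)) / ((1 + Real.exp (x - t)) * Real.sqrt (x^2 - d^2)))
  - Real.log Real.pi

/-- `κᵍ(t) = inf_{d>0} ζ(t,d)`. -/
def kappaG (t : ℝ) : ℝ := sInf {e : ℝ | ∃ d > (0:ℝ), e = zeta t d}

/-- `m(T,δ)`. -/
def m0 (μ T δ : ℝ) : ℝ :=
  (1/(4*Real.pi*μ)) * ∫ p : R3, (1/Kx μ T δ 0 p - 1/‖p‖^2)

/-- `m̃(T,δ)`. -/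
def mtil (μ T δ : ℝ) : ℝ :=
  (1/(4*Real.pi*μ)) * ∫ p : R3, (1/Ktil μ T δ p - 1/‖p‖^2)

/-- `m̄(T,δ) = sup_{y ≥ 0} (1/(4πμ)) ∫ (1/K^y - 1/|p|²)`. -/
def mbar (μ T δ : ℝ) : ℝ :=
  sSup {e : ℝ | ∃ y ≥ (0:ℝ), e = (1/(4*Real.pi*μ)) * ∫ p : R3, (1/Kx μ T δ y p - 1/‖p‖^2)}

/-- `Υ₀(t)`. -/
def Ups (T δ t : ℝ) : ℝ :=
  1 - (1 + Real.exp ((t + δ)/T))⁻¹ - (1 + Real.exp ((t - δ)/T))⁻¹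

/-- `f_a(b) = (1/b) ln((a+b)/(a-b))`, extended continuously at `b = 0`. -/
def fab (a b : ℝ) : ℝ := if b = 0 then 2/a else (1/b) * Real.log ((a+b)/(a-b))

end


section KxAux

open Real Set Filter Topology

private lemma phi_ineq' {u : ℝ} (hu : 0 ≤ u) :
    u + 2*u*Real.cosh u ≤ Real.sinh u * Real.cosh u + 2*Real.sinh u := by
  set f : ℝ → ℝ := fun u => Real.sinh u * Real.cosh u + 2*Real.sinh u - 2*u*Real.cosh u - u
    with hf
  have hd : ∀ t : ℝ, HasDerivAt f
      ((Real.cosh t * Real.cosh t + Real.sinh t * Real.sinh t + 2*Real.cosh t)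
        - (2 * Real.cosh t + 2*t*Real.sinh t) - 1) t := by
    intro t
    have h1 : HasDerivAt (fun u => Real.sinh u * Real.cosh u)
        (Real.cosh t * Real.cosh t + Real.sinh t * Real.sinh t) t :=
      (Real.hasDerivAt_sinh t).mul (Real.hasDerivAt_cosh t)
    have h2 : HasDerivAt (fun u => 2*Real.sinh u) (2*Real.cosh t) t :=
      (Real.hasDerivAt_sinh t).const_mul 2
    have h3 : HasDerivAt (fun u : ℝ => 2*u*Real.cosh u)
        (2 * Real.cosh t + 2*t*Real.sinh t) t := by
      have := ((hasDerivAt_id t).const_mul 2).mul (Real.hasDerivAt_cosh t)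
      simpa [mul_one, Pi.mul_def] using this
    simpa [hf, Pi.add_def, Pi.sub_def] using ((h1.add h2).sub h3).sub (hasDerivAt_id t)
  have hmono : MonotoneOn f (Set.Ici (0:ℝ)) := by
    apply monotoneOn_of_deriv_nonneg (convex_Ici 0)
    · exact fun t _ => (hd t).differentiableAt.continuousAt.continuousWithinAt
    · exact fun t _ => (hd t).differentiableAt.differentiableWithinAt
    · intro t ht
      rw [interior_Ici] at ht
      rw [(hd t).deriv]
      have h1 : t ≤ Real.sinh t := Real.self_le_sinh_iff.2 ht.le
      have h2 : (0:ℝ) ≤ Real.sinh t := Real.sinh_nonneg_iff.2 ht.le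
      have h3 := Real.cosh_sq_sub_sinh_sq t
      nlinarith [mul_nonneg h2 (sub_nonneg.2 h1)]
  have h0 : f 0 = 0 := by simp [hf]
  have := hmono (Set.self_mem_Ici) hu hu
  rw [h0] at this
  simp only [hf] at this
  linarith

private lemma core_ineq' {x c : ℝ} (hx : 0 ≤ x) (h2 : Real.cosh (2*c) ≤ 2) :
    x * ((Real.cosh x)^2*(Real.cosh c)^2 + (Real.sinh x)^2*(Real.sinh c)^2)
      ≤ Real.sinh x * Real.cosh x * ((Real.cosh x)^2 + (Real.sinh c)^2) := by
  have hφ := phi_ineq' (by linarith : (0:ℝ) ≤ 2*x)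
  rw [Real.cosh_two_mul, Real.sinh_two_mul] at hφ
  have hx2 : 2*x ≤ Real.sinh (2*x) := Real.self_le_sinh_iff.2 (by linarith)
  rw [Real.sinh_two_mul] at hx2
  have ha : (Real.cosh x)^2 = (Real.sinh x)^2 + 1 := Real.cosh_sq x
  have hp : (Real.cosh c)^2 = (Real.sinh c)^2 + 1 := Real.cosh_sq c
  have hq : (Real.sinh c)^2 ≤ 1/2 := by
    rw [Real.cosh_two_mul, hp] at h2; linarith
  have hb : (0:ℝ) ≤ Real.sinh x := Real.sinh_nonneg_iff.2 hx
  have h1a : (1:ℝ) ≤ Real.cosh x := Real.one_le_cosh x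
  set a := Real.cosh x
  set b := Real.sinh x
  set q := Real.sinh c
  have hM : x*(3*a^2+b^2) ≤ b*a*(2*a^2+1) := by nlinarith [hφ, ha]
  have hxab : x ≤ b*a := by nlinarith [hx2, h1a, hb]
  have h1 : 0 ≤ (1-2*q^2)*(a^2*(b*a - x)) :=
    mul_nonneg (by linarith) (mul_nonneg (sq_nonneg a) (by linarith))
  have h2' : 0 ≤ q^2*(b*a*(2*a^2+1) - x*(3*a^2+b^2)) :=
    mul_nonneg (sq_nonneg q) (by linarith)
  rw [hp]
  nlinarith [h1, h2']

private lemma key_ineq' {x c : ℝ} (hx : 0 ≤ x) (h2 : Real.cosh (2*c) ≤ 2) :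
    x * (1/(Real.cosh (x+c))^2 + 1/(Real.cosh (x-c))^2)
      ≤ Real.tanh (x+c) + Real.tanh (x-c) := by
  have hA : 0 < Real.cosh (x+c) := Real.cosh_pos _
  have hB : 0 < Real.cosh (x-c) := Real.cosh_pos _
  have ha : (Real.cosh x)^2 = (Real.sinh x)^2 + 1 := Real.cosh_sq x
  have hp : (Real.cosh c)^2 = (Real.sinh c)^2 + 1 := Real.cosh_sq c
  have hAB : Real.cosh (x+c) * Real.cosh (x-c) = (Real.cosh x)^2 + (Real.sinh c)^2 := by
    rw [Real.cosh_add, Real.cosh_sub]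
    linear_combination (Real.cosh x)^2 * hp + (Real.sinh c)^2 * ha
  have hA2B2 : (Real.cosh (x-c))^2 + (Real.cosh (x+c))^2
      = 2*((Real.cosh x)^2*(Real.cosh c)^2 + (Real.sinh x)^2*(Real.sinh c)^2) := by
    rw [Real.cosh_add, Real.cosh_sub]; ring
  have hS : Real.sinh (x+c) * Real.cosh (x-c) + Real.cosh (x+c) * Real.sinh (x-c)
      = 2 * Real.sinh x * Real.cosh x := by
    have h := Real.sinh_add (x+c) (x-c)
    rw [show x+c+(x-c) = 2*x by ring, Real.sinh_two_mul] at h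
    linarith
  rw [Real.tanh_eq_sinh_div_cosh, Real.tanh_eq_sinh_div_cosh]
  rw [div_add_div _ _ hA.ne' hB.ne']
  have e1 : x * (1/(Real.cosh (x+c))^2 + 1/(Real.cosh (x-c))^2)
      = x * ((Real.cosh (x-c))^2 + (Real.cosh (x+c))^2)
        / ((Real.cosh (x+c))^2 * (Real.cosh (x-c))^2) := by
    field_simp
  rw [e1, div_le_div_iff₀ (by positivity) (by positivity)]
  rw [hA2B2, hS, show (Real.cosh (x+c))^2 * (Real.cosh (x-c))^2
      = (Real.cosh (x+c) * Real.cosh (x-c))^2 by ring, hAB]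
  have hposr : (0:ℝ) ≤ (Real.cosh x)^2 + (Real.sinh c)^2 := by positivity
  nlinarith [mul_le_mul_of_nonneg_right (core_ineq' hx h2) hposr]

private lemma hasDerivAt_N' (c t : ℝ) :
    HasDerivAt (fun x => Real.tanh (x+c) + Real.tanh (x-c))
      (1/(Real.cosh (t+c))^2 + 1/(Real.cosh (t-c))^2) t := by
  simp only [Real.tanh_eq_sinh_div_cosh]
  have h₁ : HasDerivAt (fun x : ℝ => x + c) 1 t := (hasDerivAt_id' t).add_const c
  have h₂ : HasDerivAt (fun x : ℝ => x - c) 1 t := (hasDerivAt_id' t).sub_const c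
  have hd1 := (h₁.sinh).div (h₁.cosh) (Real.cosh_pos (t+c)).ne'
  have hd2 := (h₂.sinh).div (h₂.cosh) (Real.cosh_pos (t-c)).ne'
  refine (hd1.add hd2).congr_deriv ?_
  have e1 := Real.cosh_sq_sub_sinh_sq (t+c)
  have e2 := Real.cosh_sq_sub_sinh_sq (t-c)
  have hA := (Real.cosh_pos (t+c)).ne'
  have hB := (Real.cosh_pos (t-c)).ne'
  field_simp
  ring_nf
  nlinarith [e1, e2, sq_nonneg (Real.cosh (t+c)), sq_nonneg (Real.cosh (t-c)),
    mul_pos (mul_pos (Real.cosh_pos (t+c)) (Real.cosh_pos (t+c)))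
      (mul_pos (Real.cosh_pos (t-c)) (Real.cosh_pos (t-c)))]

private lemma g_antitone' {c : ℝ} (h2 : Real.cosh (2*c) ≤ 2) :
    AntitoneOn (fun x => (Real.tanh (x+c) + Real.tanh (x-c)) / x) (Set.Ioi 0) := by
  apply antitoneOn_of_deriv_nonpos (convex_Ioi 0)
  · exact ContinuousOn.div (Continuous.continuousOn (Differentiable.continuous
      (fun t => (hasDerivAt_N' c t).differentiableAt)))
      continuousOn_id (fun t ht => ne_of_gt ht)
  · rw [interior_Ioi]
    exact fun t ht =>
      (((hasDerivAt_N' c t).div (hasDerivAt_id' t) (ne_of_gt ht))).differentiableAt.differentiableWithinAt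
  · rw [interior_Ioi]
    intro t ht
    rw [HasDerivAt.deriv (f := fun x => (Real.tanh (x+c) + Real.tanh (x-c)) / x) ((hasDerivAt_N' c t).div (hasDerivAt_id' t) (ne_of_gt ht))]
    apply div_nonpos_of_nonpos_of_nonneg _ (sq_nonneg _)
    have := key_ineq' (le_of_lt ht) h2
    nlinarith [this]

private lemma Npos' {u c : ℝ} (hu : 0 < u) : 0 < Real.tanh (u+c) + Real.tanh (u-c) := by
  rw [Real.tanh_eq_sinh_div_cosh, Real.tanh_eq_sinh_div_cosh,
    div_add_div _ _ (Real.cosh_pos (u+c)).ne' (Real.cosh_pos (u-c)).ne']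
  apply div_pos _ (mul_pos (Real.cosh_pos _) (Real.cosh_pos _))
  have h := Real.sinh_add (u+c) (u-c)
  rw [show u+c+(u-c) = 2*u by ring] at h
  rw [← h]
  exact Real.sinh_pos_iff.2 (by linarith)

private lemma g_tendsto' (c : ℝ) :
    Filter.Tendsto (fun v => (Real.tanh (v+c) + Real.tanh (v-c)) / v) (nhdsWithin 0 (Set.Ioi 0))
      (nhds (2/(Real.cosh c)^2)) := by
  have h := hasDerivAt_iff_tendsto_slope.mp (hasDerivAt_N' c 0)
  have hval : 1/(Real.cosh (0+c))^2 + 1/(Real.cosh (0-c))^2 = 2/(Real.cosh c)^2 := by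
    rw [zero_add, zero_sub, Real.cosh_neg]; ring
  rw [hval] at h
  have h2 := h.mono_left (nhdsWithin_mono 0 (fun v hv => ne_of_gt hv : Set.Ioi 0 ⊆ {(0:ℝ)}ᶜ))
  apply h2.congr
  intro v
  simp [slope, Real.tanh_neg, sub_eq_add_neg]
  ring

private lemma g_le' {c u : ℝ} (hu : 0 < u) (h2 : Real.cosh (2*c) ≤ 2) :
    (Real.tanh (u+c) + Real.tanh (u-c)) / u ≤ 2/(Real.cosh c)^2 := by
  apply ge_of_tendsto (g_tendsto' c)
  filter_upwards [Ioc_mem_nhdsGT_of_mem (Set.left_mem_Ico.2 hu)] with v hv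
  exact g_antitone' h2 hv.1 hu hv.2

private lemma G_mono' {T δ : ℝ} (hT : 0 < T) (h2c : Real.cosh (2*(δ/(2*T))) ≤ 2)
    {E1 E2 : ℝ} (h1 : 0 ≤ E1) (h12 : E1 ≤ E2) :
    (if E1 = 0 then 2 * T * (Real.cosh (δ / (2*T)))^2
      else 2 * E1 / (Real.tanh ((E1 + δ)/(2*T)) + Real.tanh ((E1 - δ)/(2*T))))
    ≤ (if E2 = 0 then 2 * T * (Real.cosh (δ / (2*T)))^2
      else 2 * E2 / (Real.tanh ((E2 + δ)/(2*T)) + Real.tanh ((E2 - δ)/(2*T)))) := by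
  set c := δ/(2*T) with hc
  have h2T : (0:ℝ) < 2*T := by linarith
  have harg : ∀ E : ℝ, (E + δ)/(2*T) = E/(2*T) + c := fun E => add_div E δ (2*T)
  have harg' : ∀ E : ℝ, (E - δ)/(2*T) = E/(2*T) - c := fun E => sub_div E δ (2*T)
  by_cases hE1 : E1 = 0
  · subst hE1
    by_cases hE2 : E2 = 0
    · simp [hE2]
    · rw [if_pos rfl, if_neg hE2]
      have hE2p : 0 < E2 := lt_of_le_of_ne h12 (Ne.symm hE2)
      set u := E2/(2*T) with hu
      have hup : 0 < u := div_pos hE2p h2T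
      rw [harg, harg', ← hu]
      have hN : 0 < Real.tanh (u+c) + Real.tanh (u-c) := Npos' hup
      rw [le_div_iff₀ hN]
      have hg := g_le' hup h2c
      rw [div_le_div_iff₀ hup (by positivity : (0:ℝ) < (Real.cosh c)^2)] at hg
      have hE2u : E2 = 2*T*u := by rw [hu]; field_simp
      nlinarith [mul_le_mul_of_nonneg_left hg hT.le]
  · have hE1p : 0 < E1 := lt_of_le_of_ne h1 (Ne.symm hE1)
    have hE2p : 0 < E2 := lt_of_lt_of_le hE1p h12
    rw [if_neg hE1, if_neg hE2p.ne']
    set u1 := E1/(2*T) with hu1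
    set u2 := E2/(2*T) with hu2
    have hu1p : 0 < u1 := div_pos hE1p h2T
    have hu2p : 0 < u2 := div_pos hE2p h2T
    have hu12 : u1 ≤ u2 := by rw [hu1, hu2]; gcongr
    rw [harg, harg', ← hu1, harg, harg', ← hu2]
    have hN1 : 0 < Real.tanh (u1+c) + Real.tanh (u1-c) := Npos' hu1p
    have hN2 : 0 < Real.tanh (u2+c) + Real.tanh (u2-c) := Npos' hu2p
    rw [div_le_div_iff₀ hN1 hN2]
    have hga := g_antitone' h2c hu1p hu2p hu12
    rw [div_le_div_iff₀ hu2p hu1p] at hga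
    have hE1u : E1 = 2*T*u1 := by rw [hu1]; field_simp
    have hE2u : E2 = 2*T*u2 := by rw [hu2]; field_simp
    nlinarith [hga, hT]

private lemma Ktendsto' (μ T δ : ℝ) (hT : 0 < T) (h2c : Real.cosh (2*(δ/(2*T))) ≤ 2) (p : R3) :
    Filter.Tendsto (fun x => Kx μ T δ x p) (nhdsWithin 0 (Set.Ioi 0))
      (nhds (Kx μ T δ 0 p)) := by
  have h2T : (0:ℝ) < 2*T := by linarith
  by_cases he : ‖p‖^2 - μ = 0
  · have hEE : ∀ x : ℝ, 0 ≤ x → EE μ x p = x := by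
      intro x hx
      rw [EE, he, show (0:ℝ)^2 + x^2 = x^2 by ring]
      exact Real.sqrt_sq hx
    have hE0 : EE μ 0 p = 0 := hEE 0 le_rfl
    have hK0 : Kx μ T δ 0 p = 2*T*(Real.cosh (δ/(2*T)))^2 := by
      unfold Kx; rw [if_pos hE0]
    set c := δ/(2*T) with hc
    have hcomp : Filter.Tendsto (fun x : ℝ => x/(2*T)) (nhdsWithin 0 (Set.Ioi 0))
        (nhdsWithin 0 (Set.Ioi 0)) := by
      apply tendsto_nhdsWithin_of_tendsto_nhds_of_eventually_within
      · have h := (continuous_id.div_const (2*T)).tendsto (0:ℝ)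
        simpa using h.mono_left nhdsWithin_le_nhds
      · filter_upwards [self_mem_nhdsWithin] with x hx
        exact div_pos hx h2T
    have hg2 := (g_tendsto' c).comp hcomp
    have hNe : (2/(Real.cosh c)^2) ≠ 0 := by positivity
    have hlim := Filter.Tendsto.div
      (tendsto_const_nhds : Filter.Tendsto (fun _ : ℝ => 4*T) _ (nhds (4*T))) hg2 hNe
    rw [hK0, show (2*T*(Real.cosh c)^2) = 4*T/(2/(Real.cosh c)^2) by
      field_simp; ring]
    apply Filter.Tendsto.congr' _ hlim
    filter_upwards [self_mem_nhdsWithin] with x hx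
    have hxp : (0:ℝ) < x := hx
    have hup : 0 < x/(2*T) := div_pos hxp h2T
    have hN := Npos' (c := c) hup
    unfold Kx
    rw [if_neg (by rw [hEE x hxp.le]; exact hxp.ne'), hEE x hxp.le, add_div, sub_div, ← hc]
    simp only [Pi.div_apply, Function.comp_apply]
    rw [div_div_eq_mul_div, show 4*T*(x/(2*T)) = 2*x by field_simp; ring]
  · have hEpos : ∀ x : ℝ, 0 < EE μ x p := by
      intro x
      apply Real.sqrt_pos.2
      have h1 : 0 < (‖p‖^2 - μ)^2 := (sq_nonneg _).lt_of_ne (Ne.symm (pow_ne_zero 2 he))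
      nlinarith [sq_nonneg x]
    have hcont : Continuous (fun x : ℝ => EE μ x p) := by
      unfold EE
      exact Real.continuous_sqrt.comp (by continuity)
    have htanh : Continuous Real.tanh := by
      have h : Real.tanh = fun y => Real.sinh y / Real.cosh y := funext Real.tanh_eq_sinh_div_cosh
      rw [h]
      exact Real.continuous_sinh.div Real.continuous_cosh fun y => (Real.cosh_pos y).ne'
    set D : ℝ → ℝ := fun x => Real.tanh ((EE μ x p + δ)/(2*T)) + Real.tanh ((EE μ x p - δ)/(2*T))
      with hD
    have hDcont : Continuous D :=
      (htanh.comp ((hcont.add continuous_const).div_const _)).add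
        (htanh.comp ((hcont.sub continuous_const).div_const _))
    have hD0 : 0 < D 0 := by
      have h0 : 0 < EE μ 0 p / (2*T) := div_pos (hEpos 0) h2T
      have := Npos' (c := δ/(2*T)) h0
      rw [hD]
      simpa [add_div, sub_div] using this
    have hKx : ∀ x : ℝ, Kx μ T δ x p = 2 * EE μ x p / D x := by
      intro x
      unfold Kx
      rw [if_neg (hEpos x).ne']
    have hca : ContinuousAt (fun x : ℝ => 2 * EE μ x p / D x) 0 :=
      ((continuous_const.mul hcont).continuousAt).div hDcont.continuousAt hD0.ne'
    simp only [hKx]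
    exact hca.tendsto.mono_left nhdsWithin_le_nhds

end KxAux

/-- for `cosh(2c) ≤ 2` the function `x ↦ (tanh(x+c)+tanh(x-c))/x` is
nonincreasing on `(0,∞)`; consequently `x ↦ K^x_{T,δ}(p)` is nondecreasing and
`inf_{x>0} K^x_{T,δ}(p) = K⁰_{T,δ}(p)` whenever `cosh(δ/T) ≤ 2`. -/
theorem Kx_monotone_of_cosh_le_two
    (μ : ℝ) (c : ℝ) (hc : 0 ≤ c) (h2 : Real.cosh (2*c) ≤ 2) :
    AntitoneOn (fun x => (Real.tanh (x + c) + Real.tanh (x - c)) / x) (Set.Ioi 0) ∧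
    ∀ T δ : ℝ, 0 < T → 0 ≤ δ → Real.cosh (δ/T) ≤ 2 → ∀ p : R3,
      MonotoneOn (fun x => Kx μ T δ x p) (Set.Ici 0) ∧
      Ktil μ T δ p = Kx μ T δ 0 p := by
  refine ⟨g_antitone' h2, ?_⟩
  intro T δ hT hδ h2' p
  have hTne : T ≠ 0 := ne_of_gt hT
  have h2c : Real.cosh (2*(δ/(2*T))) ≤ 2 := by
    rwa [show 2*(δ/(2*T)) = δ/T by field_simp]
  have hmono : MonotoneOn (fun x => Kx μ T δ x p) (Set.Ici 0) := by
    intro x hx y hy hxy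
    have hEE : EE μ x p ≤ EE μ y p := by
      unfold EE
      apply Real.sqrt_le_sqrt
      have hx0 : (0:ℝ) ≤ x := hx
      nlinarith [hx0, hxy]
    exact G_mono' hT h2c (Real.sqrt_nonneg _) hEE
  refine ⟨hmono, ?_⟩
  have hlow : ∀ x : {x : ℝ // 0 < x}, Kx μ T δ 0 p ≤ Kx μ T δ x.1 p :=
    fun x => hmono Set.self_mem_Ici (Set.mem_Ici.2 x.2.le) x.2.le
  have hbdd : BddBelow (Set.range fun x : {x : ℝ // 0 < x} => Kx μ T δ x.1 p) :=
    ⟨Kx μ T δ 0 p, by rintro _ ⟨x, rfl⟩; exact hlow x⟩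
  apply le_antisymm
  · apply ge_of_tendsto (Ktendsto' μ T δ hT h2c p)
    filter_upwards [self_mem_nhdsWithin] with x hx
    exact ciInf_le hbdd ⟨x, hx⟩
  · exact le_ciInf hlow
end

section
/- For each c ≥ 0, the function f(·,c), where f(x,c) = x/(tanh((x+c)/2) + tanh((x−c)/2)) for x > 0 and f(0,c) = cosh²(c/2) (continuous extension), attains its global minimum on [0,∞) at some point b(c), and f(·,c) is monotone nondecreasing on [b(c),∞); moreover b(c) = 0 whenever cosh c ≤ 2. Consequently, for T > 0, δ ≥ 0 and p ∈ ℝ³, with c = δ/T: inf_{x≥0} K^x_{T,δ}(p) = K⁰_{T,δ}(p) if ||p|²−μ̄| ≥ T·b(c), while inf_{x≥0} K^x_{T,δ}(p) = 2T·f(b(c),c) if ||p|²−μ̄| < T·b(c). -/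
open MeasureTheory Filter
open scoped RealInnerProductSpace ENNReal Topology

section auxff
open Set
/-- `f(x,c) = x/(tanh((x+c)/2) + tanh((x-c)/2))`, extended continuously at `x = 0`. -/
private lemma aux_tanh_add (a b : ℝ) :
    Real.tanh a + Real.tanh b = Real.sinh (a+b) / (Real.cosh a * Real.cosh b) := by
  rw [Real.tanh_eq_sinh_div_cosh, Real.tanh_eq_sinh_div_cosh, Real.sinh_add]
  field_simp [(Real.cosh_pos a).ne', (Real.cosh_pos b).ne']

private lemma aux_cosh_prod (u v : ℝ) :
    Real.cosh u * Real.cosh v = (Real.cosh (u+v) + Real.cosh (u-v)) / 2 := by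
  have h1 := Real.cosh_add u v
  have h2 := Real.cosh_sub u v
  linarith

private lemma aux_ff_pos (c x : ℝ) (hx : x ≠ 0) :
    ff c x = x * (Real.cosh x + Real.cosh c) / (2 * Real.sinh x) := by
  have huv : (x+c)/2 + (x-c)/2 = x := by ring
  have huv' : (x+c)/2 - (x-c)/2 = c := by ring
  rw [ff, if_neg hx, aux_tanh_add, aux_cosh_prod, huv, huv', div_div_eq_mul_div]
  ring

private lemma aux_ff_zero (c : ℝ) : ff c 0 = (Real.cosh c + 1) / 2 := by
  rw [ff, if_pos rfl]
  have h := Real.cosh_two_mul (c/2)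
  have h2 : 2*(c/2) = c := by ring
  have h3 := Real.sinh_sq (c/2)
  rw [h2] at h
  linarith

private lemma aux_sinh_le (x : ℝ) (hx : 0 ≤ x) : Real.sinh x ≤ x * Real.cosh x := by
  have hF : ∀ y : ℝ, HasDerivAt (fun y => y * Real.cosh y - Real.sinh y) (y * Real.sinh y) y := by
    intro y
    have := ((hasDerivAt_id y).mul (Real.hasDerivAt_cosh y)).sub (Real.hasDerivAt_sinh y)
    apply HasDerivAt.congr_deriv this
    simp only [id_eq]
    ring
  have hmono : MonotoneOn (fun y : ℝ => y * Real.cosh y - Real.sinh y) (Ici 0) := by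
    apply monotoneOn_of_deriv_nonneg (convex_Ici 0)
    · exact fun y _ => ((hF y).continuousAt).continuousWithinAt
    · exact fun y _ => (hF y).differentiableAt.differentiableWithinAt
    · intro y hy
      rw [interior_Ici] at hy
      rw [(hF y).deriv]
      exact mul_nonneg (le_of_lt hy) (Real.sinh_nonneg_iff.2 (le_of_lt hy))
  have := hmono (self_mem_Ici) hx hx
  simp at this
  linarith

private lemma aux_slope_mono {s t : ℝ} (hs : 0 < s) (hst : s ≤ t) :
    Real.sinh s * t ≤ Real.sinh t * s := by
  have hq : ∀ y : ℝ, y ≠ 0 → HasDerivAt (fun y => Real.sinh y / y)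
      ((Real.cosh y * y - Real.sinh y * 1) / y^2) y := by
    intro y hy
    exact (Real.hasDerivAt_sinh y).div (hasDerivAt_id y) hy
  have hmono : MonotoneOn (fun y : ℝ => Real.sinh y / y) (Ioi 0) := by
    apply monotoneOn_of_deriv_nonneg (convex_Ioi 0)
    · exact fun y hy => ((hq y (ne_of_gt hy)).continuousAt).continuousWithinAt
    · intro y hy
      rw [interior_Ioi] at hy
      exact (hq y (ne_of_gt hy)).differentiableAt.differentiableWithinAt
    · intro y hy
      rw [interior_Ioi] at hy
      rw [(hq y (ne_of_gt hy)).deriv]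
      apply div_nonneg _ (sq_nonneg y)
      have := aux_sinh_le y (le_of_lt hy)
      linarith
  have ht : (0:ℝ) < t := lt_of_lt_of_le hs hst
  have := hmono (mem_Ioi.2 hs) (mem_Ioi.2 ht) hst
  rw [div_le_div_iff₀ hs ht] at this
  linarith

private lemma aux_cosh_quad (t : ℝ) (ht : 0 ≤ t) : 1 + t^2/2 ≤ Real.cosh t := by
  have h := Real.cosh_two_mul (t/2)
  have h2 : 2*(t/2) = t := by ring
  rw [h2] at h
  have hs : t/2 ≤ Real.sinh (t/2) := Real.self_le_sinh_iff.2 (by linarith)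
  have hc := Real.cosh_sq (t/2)
  nlinarith

private lemma aux_sinh_ge (x : ℝ) (hx : 0 ≤ x) : x * (1 + x^2/8) ≤ Real.sinh x := by
  have h := Real.sinh_two_mul (x/2)
  have h2 : 2*(x/2) = x := by ring
  rw [h2] at h
  have hs : x/2 ≤ Real.sinh (x/2) := Real.self_le_sinh_iff.2 (by linarith)
  have hc := aux_cosh_quad (x/2) (by linarith)
  have hcp := Real.cosh_pos (x/2)
  nlinarith

private noncomputable def phiA (κ x : ℝ) : ℝ :=
  (Real.cosh x + κ) * Real.sinh x - x * (1 + κ * Real.cosh x)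

private lemma phiA_cont (κ : ℝ) : Continuous (phiA κ) := by
  unfold phiA; fun_prop

private lemma phiA_hasDeriv (κ x : ℝ) :
    HasDerivAt (phiA κ) (Real.sinh x * (2 * Real.sinh x - κ * x)) x := by
  have h := (((Real.hasDerivAt_cosh x).add_const κ).mul (Real.hasDerivAt_sinh x)).sub
    ((hasDerivAt_id x).mul (((Real.hasDerivAt_cosh x).const_mul κ).const_add 1))
  apply HasDerivAt.congr_deriv h
  have hc := Real.cosh_sq x
  simp only [id_eq]
  linear_combination hc

private lemma phiA_zero (κ : ℝ) : phiA κ 0 = 0 := by simp [phiA]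

private lemma ff_hasDeriv (c x : ℝ) (hx : 0 < x) :
    HasDerivAt (ff c) (phiA (Real.cosh c) x / (2 * Real.sinh x ^ 2)) x := by
  have hs : 0 < Real.sinh x := Real.sinh_pos_iff.2 hx
  have hden : (2 * Real.sinh x) ≠ 0 := by positivity
  have h1 := ((hasDerivAt_id x).mul ((Real.hasDerivAt_cosh x).add_const (Real.cosh c))).div
    ((Real.hasDerivAt_sinh x).const_mul 2) hden
  have h2 : ff c =ᶠ[nhds x] fun y => y * (Real.cosh y + Real.cosh c) / (2 * Real.sinh y) := by
    filter_upwards [eventually_ne_nhds hx.ne'] with y hy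
    exact aux_ff_pos c y hy
  have h3 := h1.congr_of_eventuallyEq h2
  apply HasDerivAt.congr_deriv h3
  have hc := Real.cosh_sq x
  simp only [phiA, id_eq, Pi.mul_apply]
  rw [div_eq_div_iff (by positivity) (by positivity)]
  linear_combination (-(4*x*Real.sinh x^2)) * hc

private lemma ff_contOn (c : ℝ) : ContinuousOn (ff c) (Ici 0) := by
  intro x hx
  rcases eq_or_lt_of_le (mem_Ici.1 hx) with h0 | hpos
  · subst h0
    have hub : ∀ᶠ y in nhdsWithin (0:ℝ) (Ici 0),
        ff c y ≤ (Real.cosh y + Real.cosh c)/2 := by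
      filter_upwards [self_mem_nhdsWithin] with y hy
      rcases eq_or_lt_of_le (mem_Ici.1 hy) with h | h
      · rw [← h, aux_ff_zero, Real.cosh_zero]; linarith
      · rw [aux_ff_pos c y h.ne']
        have hs : 0 < Real.sinh y := Real.sinh_pos_iff.2 h
        rw [div_le_div_iff₀ (by positivity) (by norm_num)]
        have h1 : y ≤ Real.sinh y := Real.self_le_sinh_iff.2 h.le
        have h2 : 0 < Real.cosh y + Real.cosh c := by positivity
        nlinarith
    have hlb : ∀ᶠ y in nhdsWithin (0:ℝ) (Ici 0),
        (Real.cosh y + Real.cosh c)/(2*Real.cosh y) ≤ ff c y := by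
      filter_upwards [self_mem_nhdsWithin] with y hy
      rcases eq_or_lt_of_le (mem_Ici.1 hy) with h | h
      · rw [← h, aux_ff_zero, Real.cosh_zero]; rw [mul_one]; linarith
      · rw [aux_ff_pos c y h.ne']
        have hs : 0 < Real.sinh y := Real.sinh_pos_iff.2 h
        have hcy := Real.cosh_pos y
        rw [div_le_div_iff₀ (by positivity) (by positivity)]
        have h1 : Real.sinh y ≤ y * Real.cosh y := aux_sinh_le y h.le
        have h2 : 0 < Real.cosh y + Real.cosh c := by positivity
        nlinarith
    have hlim_ub : Filter.Tendsto (fun y => (Real.cosh y + Real.cosh c)/2)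
        (nhdsWithin (0:ℝ) (Ici 0)) (nhds (ff c 0)) := by
      rw [aux_ff_zero]
      have : Continuous (fun y => (Real.cosh y + Real.cosh c)/2) := by fun_prop
      have h2 := (this.tendsto 0).mono_left (nhdsWithin_le_nhds (s := Ici 0))
      simpa [Real.cosh_zero, add_comm] using h2
    have hlim_lb : Filter.Tendsto (fun y => (Real.cosh y + Real.cosh c)/(2*Real.cosh y))
        (nhdsWithin (0:ℝ) (Ici 0)) (nhds (ff c 0)) := by
      rw [aux_ff_zero]
      have hcont : Continuous (fun y => (Real.cosh y + Real.cosh c)/(2*Real.cosh y)) := by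
        apply Continuous.div (by fun_prop) (by fun_prop)
        intro y; positivity
      have h2 := (hcont.tendsto 0).mono_left (nhdsWithin_le_nhds (s := Ici 0))
      simpa [Real.cosh_zero, add_comm] using h2
    exact tendsto_of_tendsto_of_tendsto_of_le_of_le' hlim_lb hlim_ub hlb hub
  · exact ((ff_hasDeriv c x hpos).continuousAt).continuousWithinAt
end auxff


set_option maxHeartbeats 1000000 in
/-- `f(·,c)` attains its global minimum on `[0,∞)` at some `b(c)`, is
nondecreasing on `[b(c),∞)`, `b(c) = 0` when `cosh c ≤ 2`, and the resulting formula for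
`inf_{x ≥ 0} K^x_{T,δ}(p)`. -/
theorem ff_min_and_Ktil_formula (μ : ℝ) (c : ℝ) (hc : 0 ≤ c) :
    ∃ b : ℝ, 0 ≤ b ∧ (∀ x, 0 ≤ x → ff c b ≤ ff c x) ∧
      MonotoneOn (ff c) (Set.Ici b) ∧
      (Real.cosh c ≤ 2 → b = 0) ∧
      ∀ T δ : ℝ, 0 < T → 0 ≤ δ → δ / T = c → ∀ p : R3,
        (T * b ≤ |‖p‖^2 - μ| →
          (⨅ x : {x : ℝ // 0 ≤ x}, Kx μ T δ x.1 p) = Kx μ T δ 0 p) ∧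
        (|‖p‖^2 - μ| < T * b →
          (⨅ x : {x : ℝ // 0 ≤ x}, Kx μ T δ x.1 p) = 2 * T * ff c b) := by
  set κ := Real.cosh c with hκdef
  have hκ1 : 1 ≤ κ := Real.one_le_cosh c
  set S : Set ℝ := {x | 0 ≤ x ∧ phiA κ x ≤ 0} with hS
  have h0S : (0:ℝ) ∈ S := ⟨le_refl _, le_of_eq (phiA_zero κ)⟩
  have hphic : Continuous (phiA κ) := phiA_cont κ
  have hSbdd : BddAbove S := by
    refine ⟨3*(κ+1), ?_⟩
    intro x hx
    by_contra hgt
    push_neg at hgt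
    have hx0 : 0 ≤ x := hx.1
    have hxpos : 0 < x := lt_of_le_of_lt (by positivity) hgt
    have h1 : x*(1+x^2/8) ≤ Real.sinh x := aux_sinh_ge x hx0
    have h2 : (1:ℝ) ≤ Real.cosh x := Real.one_le_cosh x
    have h3 : 0 ≤ Real.sinh x := Real.sinh_nonneg_iff.2 hx0
    have e1 : Real.cosh x * (Real.sinh x - (1+κ)*x) ≤ phiA κ x := by
      simp only [phiA]
      nlinarith
    have e2 : 0 < Real.sinh x - (1+κ)*x := by
      have hsq : (3*(κ+1))*(3*(κ+1)) < x*x := by nlinarith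
      nlinarith
    have : 0 < phiA κ x := lt_of_lt_of_le (by positivity) e1
    linarith [hx.2]
  have hSclosed : IsClosed S := by
    have : S = Set.Ici 0 ∩ (phiA κ)⁻¹' (Set.Iic 0) := by
      ext y; simp [hS, Set.mem_Ici, Set.mem_Iic]
    rw [this]
    exact isClosed_Ici.inter (isClosed_Iic.preimage hphic)
  set b := sSup S with hbdef
  have hbS : b ∈ S := hSclosed.csSup_mem ⟨0, h0S⟩ hSbdd
  have hb0 : 0 ≤ b := hbS.1
  have hphib : phiA κ b ≤ 0 := hbS.2
  have hpos_after : ∀ x, b < x → 0 < phiA κ x := by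
    intro x hx
    by_contra h
    push_neg at h
    exact absurd (le_csSup hSbdd ⟨le_trans hb0 hx.le, h⟩) (not_le.2 hx)
  have hneg_before : ∀ x, 0 ≤ x → x ≤ b → phiA κ x ≤ 0 := by
    intro y hy0 hyb
    by_contra hpos
    push_neg at hpos
    have hy0' : 0 < y := by
      rcases eq_or_lt_of_le hy0 with h | h
      · exfalso; rw [← h, phiA_zero] at hpos; linarith
      · exact h
    have hyb' : y < b := lt_of_le_of_ne hyb (fun h => by rw [h] at hpos; linarith)
    obtain ⟨s, hs, hs'⟩ := exists_hasDerivAt_eq_slope (phiA κ)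
      (fun x => Real.sinh x * (2*Real.sinh x - κ*x)) hy0' hphic.continuousOn
      (fun x _ => phiA_hasDeriv κ x)
    obtain ⟨t, ht, ht'⟩ := exists_hasDerivAt_eq_slope (phiA κ)
      (fun x => Real.sinh x * (2*Real.sinh x - κ*x)) hyb' hphic.continuousOn
      (fun x _ => phiA_hasDeriv κ x)
    have hspos : 0 < s := hs.1
    have hst : s < t := hs.2.trans ht.1
    have htpos : 0 < t := hspos.trans hst
    have hss : 0 < Real.sinh s := Real.sinh_pos_iff.2 hspos
    have hts : 0 < Real.sinh t := Real.sinh_pos_iff.2 htpos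
    have h2s : 0 < 2*Real.sinh s - κ*s := by
      have hpos2 : 0 < Real.sinh s * (2*Real.sinh s - κ*s) := by
        rw [hs', phiA_zero]
        apply div_pos (by linarith) (by linarith)
      nlinarith
    have h2t : 2*Real.sinh t - κ*t < 0 := by
      have hneg2 : Real.sinh t * (2*Real.sinh t - κ*t) < 0 := by
        rw [ht']
        apply div_neg_of_neg_of_pos (by linarith) (by linarith)
      nlinarith
    have hslope := aux_slope_mono hspos hst.le
    have A : κ*s*t < 2*Real.sinh s*t := by nlinarith
    have B : 2*Real.sinh t*s < κ*t*s := by nlinarith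
    nlinarith
  have hcont := ff_contOn c
  have hmono : MonotoneOn (ff c) (Set.Ici b) := by
    apply monotoneOn_of_deriv_nonneg (convex_Ici b) (hcont.mono (Set.Ici_subset_Ici.2 hb0))
    · intro x hx
      rw [interior_Ici] at hx
      exact (ff_hasDeriv c x (lt_of_le_of_lt hb0 hx)).differentiableAt.differentiableWithinAt
    · intro x hx
      rw [interior_Ici] at hx
      have hxpos : 0 < x := lt_of_le_of_lt hb0 hx
      rw [(ff_hasDeriv c x hxpos).deriv]
      have hsp : 0 < Real.sinh x := Real.sinh_pos_iff.2 hxpos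
      exact div_nonneg (hpos_after x hx).le (by positivity)
  have hanti : AntitoneOn (ff c) (Set.Icc 0 b) := by
    apply antitoneOn_of_deriv_nonpos (convex_Icc 0 b) (hcont.mono Set.Icc_subset_Ici_self)
    · intro x hx
      rw [interior_Icc] at hx
      exact (ff_hasDeriv c x hx.1).differentiableAt.differentiableWithinAt
    · intro x hx
      rw [interior_Icc] at hx
      rw [(ff_hasDeriv c x hx.1).deriv]
      have hsp : 0 < Real.sinh x := Real.sinh_pos_iff.2 hx.1
      exact div_nonpos_of_nonpos_of_nonneg (hneg_before x hx.1.le hx.2.le) (by positivity)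
  have hmin : ∀ x, 0 ≤ x → ff c b ≤ ff c x := by
    intro x hx
    rcases le_total x b with h | h
    · exact hanti ⟨hx, h⟩ ⟨hb0, le_refl b⟩ h
    · exact hmono (Set.self_mem_Ici) h h
  have hbzero : Real.cosh c ≤ 2 → b = 0 := by
    intro hκ2
    have hSsing : S = {0} := by
      apply Set.eq_singleton_iff_unique_mem.2 ⟨h0S, ?_⟩
      intro x hx
      by_contra hne
      have hxpos : 0 < x := lt_of_le_of_ne hx.1 (Ne.symm hne)
      obtain ⟨s, hs, hs'⟩ := exists_hasDerivAt_eq_slope (phiA κ)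
        (fun y => Real.sinh y * (2*Real.sinh y - κ*y)) hxpos hphic.continuousOn
        (fun y _ => phiA_hasDeriv κ y)
      have hsp : 0 < s := hs.1
      have h1 : s < Real.sinh s := Real.self_lt_sinh_iff.2 hsp
      have hss : 0 < Real.sinh s := Real.sinh_pos_iff.2 hsp
      rw [← hκdef] at hκ2
      have h2s : 0 < 2*Real.sinh s - κ*s := by nlinarith
      have h2 : 0 < Real.sinh s * (2*Real.sinh s - κ*s) := mul_pos hss h2s
      rw [hs', phiA_zero] at h2
      have h3 : 0 < phiA κ x := by
        rcases div_pos_iff.1 h2 with ⟨h4, _⟩ | ⟨_, h4⟩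
        · linarith
        · linarith
      linarith [hx.2]
    rw [hbdef, hSsing, csSup_singleton]
  refine ⟨b, hb0, hmin, hmono, hbzero, ?_⟩
  clear_value b
  intro T δ hT hδ hδT p
  set a := ‖p‖^2 - μ with hadef
  haveI : Nonempty {x : ℝ // 0 ≤ x} := ⟨⟨0, le_refl 0⟩⟩
  have hEE : ∀ x : ℝ, EE μ x p = Real.sqrt (a^2 + x^2) := fun x => rfl
  clear_value a
  have hEnonneg : ∀ x : ℝ, 0 ≤ EE μ x p := fun x => Real.sqrt_nonneg _
  have hKx : ∀ x : ℝ, Kx μ T δ x p = 2 * T * ff c (EE μ x p / T) := by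
    intro x
    rcases eq_or_ne (EE μ x p) 0 with h | h
    · rw [Kx, if_pos h, h, zero_div, ff, if_pos rfl]
      have hδ2 : δ/(2*T) = c/2 := by rw [← hδT]; ring
      rw [hδ2]
    · have hE : 0 < EE μ x p := lt_of_le_of_ne (hEnonneg x) (Ne.symm h)
      have hET : 0 < EE μ x p / T := div_pos hE hT
      rw [Kx, if_neg h, aux_ff_pos c _ hET.ne']
      have e1 : (EE μ x p + δ)/(2*T) + (EE μ x p - δ)/(2*T) = EE μ x p / T := by
        field_simp; ring
      have e2 : (EE μ x p + δ)/(2*T) - (EE μ x p - δ)/(2*T) = c := by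
        rw [← hδT]; field_simp; ring
      rw [aux_tanh_add, aux_cosh_prod, e1, e2]
      have hsinh : 0 < Real.sinh (EE μ x p / T) := Real.sinh_pos_iff.2 hET
      rw [div_div_eq_mul_div]
      field_simp
  have hE0 : EE μ 0 p = |a| := by
    rw [hEE]
    norm_num
    exact Real.sqrt_sq_eq_abs a
  have hEge : ∀ x : ℝ, |a| ≤ EE μ x p := by
    intro x
    rw [hEE, ← Real.sqrt_sq_eq_abs]
    exact Real.sqrt_le_sqrt (by nlinarith [sq_nonneg x])
  have hbdd : BddBelow (Set.range fun x : {x : ℝ // 0 ≤ x} => Kx μ T δ x.1 p) := by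
    refine ⟨2*T*ff c b, ?_⟩
    rintro y ⟨x, rfl⟩
    show 2*T*ff c b ≤ Kx μ T δ x.1 p
    rw [hKx]
    exact mul_le_mul_of_nonneg_left (hmin _ (div_nonneg (hEnonneg x.1) hT.le)) (by positivity)
  constructor
  · intro h
    apply le_antisymm
    · exact ciInf_le hbdd ⟨0, le_refl 0⟩
    · apply le_ciInf
      intro x
      show Kx μ T δ 0 p ≤ Kx μ T δ x.1 p
      rw [hKx, hKx]
      apply mul_le_mul_of_nonneg_left _ (by positivity)
      have hb_le : b ≤ EE μ 0 p / T := by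
        rw [hE0, le_div_iff₀ hT]
        linarith [h]
      have hle : EE μ 0 p / T ≤ EE μ x.1 p / T := by
        apply (div_le_div_iff_of_pos_right hT).2
        rw [hE0]; exact hEge x.1
      exact hmono hb_le (le_trans hb_le hle) hle
  · intro h
    have hTb : 0 < T*b := lt_of_le_of_lt (abs_nonneg a) h
    apply le_antisymm
    · set x0 := Real.sqrt ((T*b)^2 - a^2) with hx0def
      have hx0n : 0 ≤ x0 := Real.sqrt_nonneg _
      have hsq : x0^2 = (T*b)^2 - a^2 := by
        rw [hx0def]
        apply Real.sq_sqrt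
        nlinarith [abs_nonneg a, sq_abs a]
      have hEx0 : EE μ x0 p = T*b := by
        rw [hEE, hsq]
        have e3 : a^2 + ((T*b)^2 - a^2) = (T*b)^2 := by ring
        rw [e3]
        exact Real.sqrt_sq hTb.le
      calc (⨅ x : {x : ℝ // 0 ≤ x}, Kx μ T δ x.1 p) ≤ Kx μ T δ x0 p :=
            ciInf_le hbdd ⟨x0, hx0n⟩
        _ = 2*T*ff c b := by
            rw [hKx, hEx0, mul_div_cancel_left₀ b hT.ne']
    · apply le_ciInf
      intro x
      show 2 * T * ff c b ≤ Kx μ T δ x.1 p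
      rw [hKx]
      exact mul_le_mul_of_nonneg_left (hmin _ (div_nonneg (hEnonneg x.1) hT.le)) (by positivity)
end

section
/- Let μ̄ > 0. Then lim ∫_{μ̄}^∞ ( Υ₀(t)·√(μ̄+t)/t − 1/√(μ̄+t) ) dt = 2√μ̄·ln(1+√2) as (T,δ) → (0,0) with T > 0 and δ ≥ 0. -/
open MeasureTheory Filter
open scoped RealInnerProductSpace ENNReal Topology

section AuxOuter
open Set

private lemma sqrt_tendsto_atTop : Tendsto Real.sqrt atTop atTop := by
  apply tendsto_atTop_atTop.2
  intro b
  refine ⟨(max b 0)^2, fun a ha => ?_⟩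
  calc b ≤ max b 0 := le_max_left _ _
    _ = Real.sqrt ((max b 0)^2) := (Real.sqrt_sq (le_max_right _ _)).symm
    _ ≤ Real.sqrt a := Real.sqrt_le_sqrt ha

private lemma main_integral (μ : ℝ) (hμ : 0 < μ) :
    IntegrableOn (fun t => μ / (t * Real.sqrt (μ + t))) (Set.Ioi μ) ∧
    ∫ t in Set.Ioi μ, μ / (t * Real.sqrt (μ + t))
      = 2 * Real.sqrt μ * Real.log (1 + Real.sqrt 2) := by
  set c := Real.sqrt μ with hc
  have hcpos : 0 < c := Real.sqrt_pos.2 hμ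
  have hc2 : c^2 = μ := Real.sq_sqrt hμ.le
  set F : ℝ → ℝ := fun t => c * Real.log ((Real.sqrt (μ+t) - c)/(Real.sqrt (μ+t) + c)) with hF
  have hderiv : ∀ t ∈ Ici μ, HasDerivAt F (μ / (t * Real.sqrt (μ + t))) t := by
    intro t ht
    have ht' : μ ≤ t := ht
    have ht0 : 0 < t := lt_of_lt_of_le hμ ht'
    have h0 : 0 < μ + t := by linarith
    have hupos : 0 < Real.sqrt (μ+t) := Real.sqrt_pos.2 h0
    have hu2 : Real.sqrt (μ+t)^2 = μ + t := Real.sq_sqrt h0.le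
    have hcu : c < Real.sqrt (μ+t) := Real.sqrt_lt_sqrt hμ.le (by linarith)
    set u := Real.sqrt (μ+t)
    have hd1 : HasDerivAt (fun s => Real.sqrt (μ + s)) (1/(2*u)) t := by
      have h := (Real.hasDerivAt_sqrt (ne_of_gt h0)).comp t
        ((hasDerivAt_id t).const_add μ)
      simpa [Function.comp_def] using h
    have hden : u + c ≠ 0 := by positivity
    have hnum : u - c ≠ 0 := sub_ne_zero.2 (ne_of_gt hcu)
    have hd2 := (hd1.sub_const c).div (hd1.add_const c) hden
    have hq : (u - c)/(u + c) ≠ 0 := div_ne_zero hnum hden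
    have hd3 := (hd2.log hq).const_mul c
    refine hd3.congr_deriv ?_
    simp only [Pi.div_apply]
    have hu0 : u ≠ 0 := ne_of_gt hupos
    have hu' : Real.sqrt (μ + t) = u := rfl
    rw [hu', show μ = c^2 from hc2.symm, show t = u^2 - c^2 by rw [hu2, hc2]; ring]
    have h3 : u^2 - c^2 ≠ 0 := by nlinarith [hcu, hcpos]
    field_simp
    ring
  have g'pos : ∀ t ∈ Ioi μ, 0 ≤ μ / (t * Real.sqrt (μ + t)) := by
    intro t ht
    have ht0 : 0 < t := lt_trans hμ ht
    have : 0 < μ + t := by linarith [ht0]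
    positivity
  have hFlim : Tendsto F atTop (𝓝 0) := by
    have hsq : Tendsto (fun t : ℝ => Real.sqrt (μ + t)) atTop atTop :=
      sqrt_tendsto_atTop.comp (tendsto_atTop_add_const_left _ μ tendsto_id)
    have hden : Tendsto (fun t : ℝ => Real.sqrt (μ + t) + c) atTop atTop :=
      tendsto_atTop_add_const_right _ c hsq
    have hfrac : Tendsto (fun t : ℝ => 2*c/(Real.sqrt (μ + t) + c)) atTop (𝓝 0) :=
      Tendsto.div_atTop tendsto_const_nhds hden
    have hr : Tendsto (fun t : ℝ => (Real.sqrt (μ+t) - c)/(Real.sqrt (μ+t) + c))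
        atTop (𝓝 1) := by
      have h1 : Tendsto (fun t : ℝ => 1 - 2*c/(Real.sqrt (μ + t) + c)) atTop (𝓝 1) := by
        simpa using tendsto_const_nhds.sub hfrac
      refine h1.congr fun t => ?_
      have hd : Real.sqrt (μ+t) + c ≠ 0 := by
        have := Real.sqrt_nonneg (μ+t); positivity
      field_simp
      ring
    have := ((Real.continuousAt_log one_ne_zero).tendsto.comp hr).const_mul c
    simpa using this
  have hcont : ∀ x ∈ Ici μ, HasDerivAt F (μ / (x * Real.sqrt (μ + x))) x := hderiv
  constructor
  · exact integrableOn_Ioi_deriv_of_nonneg' hcont g'pos hFlim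
  · rw [integral_Ioi_of_hasDerivAt_of_nonneg' hcont g'pos hFlim]
    have h2 : Real.sqrt (μ + μ) = Real.sqrt 2 * c := by
      rw [hc, ← Real.sqrt_mul (by norm_num : (0:ℝ) ≤ 2)]
      ring_nf
    have hs2 : Real.sqrt 2 ^ 2 = 2 := Real.sq_sqrt (by norm_num)
    have hs2pos : (0:ℝ) < Real.sqrt 2 := Real.sqrt_pos.2 (by norm_num)
    have h12 : (0:ℝ) < 1 + Real.sqrt 2 := by linarith
    have hratio : (Real.sqrt (μ + μ) - c)/(Real.sqrt (μ + μ) + c)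
        = ((1 + Real.sqrt 2)^2)⁻¹ := by
      rw [h2]
      have hd : Real.sqrt 2 * c + c ≠ 0 := by positivity
      have h12' : (1 + Real.sqrt 2)^2 ≠ 0 := by positivity
      rw [div_eq_iff hd, inv_mul_eq_div, eq_div_iff h12']
      linear_combination (c*(Real.sqrt 2 + 1)) * hs2
    have : F μ = -(2 * c * Real.log (1 + Real.sqrt 2)) := by
      rw [hF]
      simp only
      rw [hratio, Real.log_inv, Real.log_pow]
      push_cast
      ring
    rw [this]
    ring

end AuxOuter

/-- limit of the outer integral as `(T,δ) → (0,0)`. -/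
theorem outer_integral_limit
    (μ : ℝ) (hμ : 0 < μ) (T δ : ℕ → ℝ)
    (hT : ∀ n, 0 < T n) (hδ : ∀ n, 0 ≤ δ n)
    (hT0 : Tendsto T atTop (𝓝 0)) (hδ0 : Tendsto δ atTop (𝓝 0)) :
    Tendsto (fun n => ∫ t in Set.Ioi μ,
        (Ups (T n) (δ n) t * Real.sqrt (μ + t) / t - 1 / Real.sqrt (μ + t))) atTop
      (𝓝 (2 * Real.sqrt μ * Real.log (1 + Real.sqrt 2))) := by
  obtain ⟨hmain_int, hmain_val⟩ := main_integral μ hμ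
  set f : ℕ → ℝ → ℝ := fun n t => (Ups (T n) (δ n) t - 1) * Real.sqrt (μ + t) / t with hf
  set g : ℝ → ℝ := fun t => (2 * Real.exp (μ/2) / μ) * ((1 + μ + t) * Real.exp (-t)) with hg
  -- integrability of the dominating function
  have hg_int : IntegrableOn g (Set.Ioi μ) := by
    have h1 : IntegrableOn (fun t : ℝ => Real.exp (-t)) (Set.Ioi μ) := by
      have := exp_neg_integrableOn_Ioi μ (by norm_num : (0:ℝ) < 1)
      simpa using this
    have h2 : IntegrableOn (fun t : ℝ => Real.exp (-t) * t ^ ((2:ℝ) - 1)) (Set.Ioi μ) :=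
      (Real.GammaIntegral_convergent (by norm_num : (0:ℝ) < 2)).mono_set
        (Set.Ioi_subset_Ioi hμ.le)
    have h2' : IntegrableOn (fun t : ℝ => t * Real.exp (-t)) (Set.Ioi μ) := by
      refine h2.congr_fun (fun t ht => ?_) measurableSet_Ioi
      simp only [show (2:ℝ) - 1 = 1 by norm_num, Real.rpow_one]
      ring
    have h3 : IntegrableOn (fun t : ℝ => (1 + μ + t) * Real.exp (-t)) (Set.Ioi μ) := by
      have h4 : IntegrableOn (fun t : ℝ => (1 + μ) * Real.exp (-t) + t * Real.exp (-t))
          (Set.Ioi μ) := (h1.const_mul (1 + μ)).add h2'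
      refine h4.congr_fun (fun t _ => ?_) measurableSet_Ioi
      ring
    exact h3.const_mul _
  -- measurability
  have hmeas : ∀ n, AEStronglyMeasurable (f n) (volume.restrict (Set.Ioi μ)) := by
    intro n
    apply Measurable.aestronglyMeasurable
    unfold f
    unfold Ups
    fun_prop
  -- eventual regime
  have hev : ∀ᶠ n in atTop, T n ≤ 1 ∧ δ n ≤ μ/2 := by
    filter_upwards [hT0.eventually (eventually_le_nhds (by norm_num : (0:ℝ) < 1)),
      hδ0.eventually (eventually_le_nhds (by positivity : (0:ℝ) < μ/2))] with n h1 h2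
    exact ⟨h1, h2⟩
  -- pointwise bound in the eventual regime
  have hbound : ∀ᶠ n in atTop, ∀ t ∈ Set.Ioi μ, ‖f n t‖ ≤ g t := by
    filter_upwards [hev] with n hn t ht
    obtain ⟨hT1, hδμ⟩ := hn
    have ht0 : 0 < t := lt_trans hμ ht
    have htμ : μ ≤ t := (le_of_lt ht)
    have h0 : 0 < μ + t := by linarith
    have hsnn : 0 ≤ Real.sqrt (μ + t) := Real.sqrt_nonneg _
    have htd0 : 0 < t - δ n := by linarith
    -- each tail term is ≤ exp(μ/2) * exp(-t)
    have key : ∀ y : ℝ, t - δ n ≤ y →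
        (1 + Real.exp (y / T n))⁻¹ ≤ Real.exp (μ/2) * Real.exp (-t) := by
      intro y hy
      have hy0 : 0 < y := lt_of_lt_of_le htd0 hy
      have e1 : (1 + Real.exp (y / T n))⁻¹ ≤ (Real.exp (y / T n))⁻¹ := by
        apply inv_anti₀ (Real.exp_pos _)
        linarith [Real.exp_pos (y / T n)]
      have e2 : y ≤ y / T n := by
        rw [le_div_iff₀ (hT n)]
        nlinarith
      have e3 : t - μ/2 ≤ y := by linarith
      calc (1 + Real.exp (y / T n))⁻¹ ≤ (Real.exp (y / T n))⁻¹ := e1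
        _ = Real.exp (-(y / T n)) := (Real.exp_neg _).symm
        _ ≤ Real.exp (-(t - μ/2)) := Real.exp_le_exp.2 (by linarith)
        _ = Real.exp (μ/2) * Real.exp (-t) := by rw [← Real.exp_add]; ring_nf
    have hU : |Ups (T n) (δ n) t - 1| ≤ 2 * Real.exp (μ/2) * Real.exp (-t) := by
      have hA := key (t + δ n) (by linarith [hδ n])
      have hB := key (t - δ n) (le_refl _)
      have hApos : 0 < (1 + Real.exp ((t + δ n) / T n))⁻¹ := by positivity
      have hBpos : 0 < (1 + Real.exp ((t - δ n) / T n))⁻¹ := by positivity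
      rw [Ups, abs_of_nonpos (by linarith)]
      linarith
    -- √(μ+t)/t ≤ (1+μ+t)/μ
    have hsle : Real.sqrt (μ + t) ≤ 1 + μ + t := by
      have h5 := Real.sq_sqrt h0.le
      nlinarith [hsnn]
    have hfrac : Real.sqrt (μ + t) / t ≤ (1 + μ + t) / μ :=
      div_le_div₀ (by linarith) hsle hμ htμ
    have : ‖f n t‖ = |Ups (T n) (δ n) t - 1| * (Real.sqrt (μ + t) / t) := by
      rw [hf]
      simp only [Real.norm_eq_abs, mul_div_assoc, abs_mul,
        abs_of_nonneg (div_nonneg hsnn ht0.le)]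
    rw [this, hg]
    calc |Ups (T n) (δ n) t - 1| * (Real.sqrt (μ + t) / t)
        ≤ (2 * Real.exp (μ/2) * Real.exp (-t)) * ((1 + μ + t) / μ) := by
          apply mul_le_mul hU hfrac (div_nonneg hsnn ht0.le) (by positivity)
      _ = 2 * Real.exp (μ/2) / μ * ((1 + μ + t) * Real.exp (-t)) := by ring
  -- pointwise limit
  have hlim : ∀ t ∈ Set.Ioi μ, Tendsto (fun n => f n t) atTop (𝓝 0) := by
    intro t ht
    have ht0 : 0 < t := lt_trans hμ ht
    have hTinv : Tendsto (fun n => (T n)⁻¹) atTop atTop := by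
      apply Filter.Tendsto.inv_tendsto_nhdsGT_zero
      rw [tendsto_nhdsWithin_iff]
      exact ⟨hT0, .of_forall fun n => hT n⟩
    have key : ∀ s : ℝ, Tendsto (fun n : ℕ => s + δ n * s⁻¹ * s) atTop (𝓝 s) → True := fun _ _ => trivial
    have hterm : ∀ (σ : ℝ), (σ = 1 ∨ σ = -1) →
        Tendsto (fun n => (1 + Real.exp ((t + σ * δ n) / T n))⁻¹) atTop (𝓝 0) := by
      intro σ hσ
      have hnum : Tendsto (fun n => t + σ * δ n) atTop (𝓝 t) := by
        have : Tendsto (fun n => σ * δ n) atTop (𝓝 (σ * 0)) := hδ0.const_mul σ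
        simpa using tendsto_const_nhds.add this
      have hdiv : Tendsto (fun n => (t + σ * δ n) / T n) atTop atTop := by
        simp only [div_eq_mul_inv]
        exact Filter.Tendsto.pos_mul_atTop ht0 hnum hTinv
      have hexp : Tendsto (fun n => Real.exp ((t + σ * δ n) / T n)) atTop atTop :=
        Real.tendsto_exp_atTop.comp hdiv
      have : Tendsto (fun n => 1 + Real.exp ((t + σ * δ n) / T n)) atTop atTop :=
        tendsto_atTop_add_const_left _ 1 hexp
      exact tendsto_inv_atTop_zero.comp this
    have h1 := hterm 1 (Or.inl rfl)
    have h2 := hterm (-1) (Or.inr rfl)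
    simp only [one_mul, neg_one_mul] at h1 h2
    have hU : Tendsto (fun n => Ups (T n) (δ n) t - 1) atTop (𝓝 0) := by
      have := (h1.neg.sub h2)
      simp only [neg_zero, sub_zero] at this
      refine this.congr fun n => ?_
      rw [Ups]
      ring_nf
    have := hU.mul_const (Real.sqrt (μ + t) / t)
    simp only [zero_mul] at this
    refine this.congr fun n => ?_
    rw [hf]; ring
  -- dominated convergence for the error term
  have herr : Tendsto (fun n => ∫ t in Set.Ioi μ, f n t) atTop (𝓝 0) := by
    have h0 : (0:ℝ) = ∫ t in Set.Ioi μ, (0:ℝ) := by simp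
    rw [h0]
    apply tendsto_integral_filter_of_dominated_convergence g
      (.of_forall hmeas) ?_ hg_int ?_
    · filter_upwards [hbound] with n hn
      exact (ae_restrict_iff' measurableSet_Ioi).2 (.of_forall hn)
    · exact (ae_restrict_iff' measurableSet_Ioi).2 (.of_forall hlim)
  -- eventual integrability of f n
  have hf_int : ∀ᶠ n in atTop, IntegrableOn (f n) (Set.Ioi μ) := by
    filter_upwards [hbound] with n hn
    apply hg_int.mono' (hmeas n)
    exact (ae_restrict_iff' measurableSet_Ioi).2 (.of_forall hn)
  -- decomposition of the integral
  have heq : ∀ᶠ n in atTop,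
      (∫ t in Set.Ioi μ, f n t) + 2 * Real.sqrt μ * Real.log (1 + Real.sqrt 2)
      = ∫ t in Set.Ioi μ,
          (Ups (T n) (δ n) t * Real.sqrt (μ + t) / t - 1 / Real.sqrt (μ + t)) := by
    filter_upwards [hf_int] with n hn
    rw [← hmain_val, ← integral_add hn hmain_int]
    apply setIntegral_congr_fun measurableSet_Ioi
    intro t ht
    have ht0 : 0 < t := lt_trans hμ ht
    have h0 : 0 < μ + t := by linarith [ht.out.le]
    have hs : 0 < Real.sqrt (μ + t) := Real.sqrt_pos.2 h0
    have hs2 : Real.sqrt (μ + t) ^ 2 = μ + t := Real.sq_sqrt h0.le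
    rw [hf]
    simp only
    field_simp
    linear_combination (-1) * hs2
  have := (herr.add_const (2 * Real.sqrt μ * Real.log (1 + Real.sqrt 2))).congr' heq
  simpa using this
end

section
/- Let μ̄ > 0. Then lim ∫₀^{μ̄} Υ₀(t)·(√(μ̄+t) + √(μ̄−t) − 2√μ̄)/t dt = 2√μ̄·( ln 4 − ln(1+√2) + √2 − 2 ) as (T,δ) → (0,0) with T > 0 and δ ≥ 0. -/
open MeasureTheory Filter
open scoped RealInnerProductSpace ENNReal Topology

section Aux
open Set Real MeasureTheory Filter
open scoped Topology

noncomputable def Fa (μ t : ℝ) : ℝ :=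
  2*Real.sqrt (μ+t) + 2*Real.sqrt (μ-t)
  - 2*Real.sqrt μ * Real.log (Real.sqrt (μ+t) + Real.sqrt μ)
  - 2*Real.sqrt μ * Real.log (Real.sqrt (μ-t) + Real.sqrt μ)

lemma hasDerivAt_Fa {μ t : ℝ} (hμ : 0 < μ) (ht : t ∈ Set.Ioo 0 μ) :
    HasDerivAt (Fa μ)
      ((Real.sqrt (μ + t) + Real.sqrt (μ - t) - 2 * Real.sqrt μ) / t) t := by
  obtain ⟨ht0, htμ⟩ := ht
  have hapos : 0 < μ + t := by linarith
  have hbpos : 0 < μ - t := by linarith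
  set a := Real.sqrt (μ + t) with ha
  set b := Real.sqrt (μ - t) with hb
  set m := Real.sqrt μ with hm
  have ha0 : 0 < a := Real.sqrt_pos.2 hapos
  have hb0 : 0 < b := Real.sqrt_pos.2 hbpos
  have hm0 : 0 < m := Real.sqrt_pos.2 hμ
  have ha2 : a^2 = μ + t := Real.sq_sqrt hapos.le
  have hb2 : b^2 = μ - t := Real.sq_sqrt hbpos.le
  have hm2 : m^2 = μ := Real.sq_sqrt hμ.le
  have h1 : HasDerivAt (fun s : ℝ => μ + s) 1 t := by
    simpa using (hasDerivAt_id t).const_add μ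
  have h2 : HasDerivAt (fun s : ℝ => μ - s) (-1) t := by
    simpa using (hasDerivAt_id t).const_sub μ
  have hs1 : HasDerivAt (fun s : ℝ => Real.sqrt (μ + s)) (1/(2*a) * 1) t :=
    (Real.hasDerivAt_sqrt hapos.ne').comp t h1
  have hs2 : HasDerivAt (fun s : ℝ => Real.sqrt (μ - s)) (1/(2*b) * (-1)) t :=
    (Real.hasDerivAt_sqrt hbpos.ne').comp t h2
  have hl1 : HasDerivAt (fun s : ℝ => Real.log (Real.sqrt (μ + s) + m))
      ((1/(2*a) * 1) / (a + m)) t := by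
    have := (Real.hasDerivAt_log (by positivity : a + m ≠ 0)).comp t (hs1.add_const m)
    simpa [div_eq_mul_inv, mul_comm, Function.comp_def] using this
  have hl2 : HasDerivAt (fun s : ℝ => Real.log (Real.sqrt (μ - s) + m))
      ((1/(2*b) * (-1)) / (b + m)) t := by
    have := (Real.hasDerivAt_log (by positivity : b + m ≠ 0)).comp t (hs2.add_const m)
    simpa [div_eq_mul_inv, mul_comm, Function.comp_def] using this
  have hD : HasDerivAt (Fa μ)
      (2 * (1/(2*a) * 1) + 2 * (1/(2*b) * (-1))
        - 2*m * ((1/(2*a) * 1) / (a + m)) - 2*m * ((1/(2*b) * (-1)) / (b + m))) t := by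
    exact (((hs1.const_mul 2).add (hs2.const_mul 2)).sub (hl1.const_mul (2*m))).sub
      (hl2.const_mul (2*m))
  convert hD using 1
  have ham : a + m ≠ 0 := by positivity
  have hbm : b + m ≠ 0 := by positivity
  have he1 : (a - m)/t = 1/(a+m) := by
    rw [div_eq_div_iff ht0.ne' ham]; linear_combination ha2 - hm2
  have he2 : (b - m)/t = -(1/(b+m)) := by
    rw [neg_div', div_eq_div_iff ht0.ne' hbm]; linear_combination hb2 - hm2
  calc (a + b - 2*m)/t = (a - m)/t + (b - m)/t := by ring
    _ = 1/(a+m) - 1/(b+m) := by rw [he1, he2]; ring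
    _ = _ := by field_simp; ring

lemma abs_sqrt_bound {μ t : ℝ} (hμ : 0 < μ) (ht0 : 0 < t) (htμ : t ≤ μ) :
    |Real.sqrt (μ + t) + Real.sqrt (μ - t) - 2 * Real.sqrt μ| ≤ t / Real.sqrt μ := by
  have hapos : 0 ≤ μ + t := by linarith
  have hbpos : 0 ≤ μ - t := by linarith
  set a := Real.sqrt (μ + t)
  set b := Real.sqrt (μ - t)
  set m := Real.sqrt μ
  have ha0 : 0 ≤ a := Real.sqrt_nonneg _
  have hb0 : 0 ≤ b := Real.sqrt_nonneg _
  have hm0 : 0 < m := Real.sqrt_pos.2 hμ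
  have ha2 : a^2 = μ + t := Real.sq_sqrt hapos
  have hb2 : b^2 = μ - t := Real.sq_sqrt hbpos
  have hm2 : m^2 = μ := Real.sq_sqrt hμ.le
  have hma : m ≤ a := by
    apply Real.sqrt_le_sqrt; linarith
  have hbm : b ≤ m := by
    apply Real.sqrt_le_sqrt; linarith
  have ht' : t / m * m = t := div_mul_cancel₀ t hm0.ne'
  rw [abs_le]
  constructor
  · have key : (m - b) * m ≤ t := by nlinarith
    nlinarith [key, ht', hm0]
  · have key : (a - m) * m ≤ t := by nlinarith
    nlinarith [key, ht', hm0]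

lemma integral_value {μ : ℝ} (hμ : 0 < μ) :
    ∫ t in Set.Ioo (0:ℝ) μ, (Real.sqrt (μ + t) + Real.sqrt (μ - t) - 2 * Real.sqrt μ) / t
      = 2 * Real.sqrt μ * (Real.log 4 - Real.log (1 + Real.sqrt 2) + Real.sqrt 2 - 2) := by
  have hm0 : 0 < Real.sqrt μ := Real.sqrt_pos.2 hμ
  set g : ℝ → ℝ := fun t => (Real.sqrt (μ + t) + Real.sqrt (μ - t) - 2 * Real.sqrt μ) / t
    with hg
  have hgcont : ContinuousOn g (Set.Ioc 0 μ) := by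
    apply ContinuousOn.div
    · fun_prop
    · fun_prop
    · exact fun t ht => ht.1.ne'
  have hgint : IntegrableOn g (Set.Ioc 0 μ) := by
    apply Measure.integrableOn_of_bounded (M := 1 / Real.sqrt μ)
    · simp [Real.volume_Ioc]
    · exact (Measurable.div (by fun_prop) measurable_id).aestronglyMeasurable
    · filter_upwards [ae_restrict_mem measurableSet_Ioc] with t ht
      have hb := abs_sqrt_bound hμ ht.1 ht.2
      rw [hg, Real.norm_eq_abs, abs_div, abs_of_pos ht.1]
      rw [div_le_div_iff₀ ht.1 hm0] at *
      calc |Real.sqrt (μ + t) + Real.sqrt (μ - t) - 2 * Real.sqrt μ| * Real.sqrt μ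
          ≤ t / Real.sqrt μ * Real.sqrt μ := by
            apply mul_le_mul_of_nonneg_right hb hm0.le
        _ = t := div_mul_cancel₀ t hm0.ne'
        _ = 1 * t := (one_mul t).symm
  have hcontF : ContinuousOn (Fa μ) (Set.Icc 0 μ) := by
    unfold Fa
    apply ContinuousOn.sub
    apply ContinuousOn.sub
    · fun_prop
    · apply ContinuousOn.mul continuousOn_const
      apply ContinuousOn.log
      · fun_prop
      · intro t ht
        have : 0 ≤ μ + t := by have := ht.1; linarith
        positivity
    · apply ContinuousOn.mul continuousOn_const
      apply ContinuousOn.log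
      · fun_prop
      · intro t ht
        positivity
  have hderiv : ∀ t ∈ Set.Ioo (0:ℝ) μ, HasDerivWithinAt (Fa μ) (g t) (Set.Ioi t) t :=
    fun t ht => (hasDerivAt_Fa hμ ht).hasDerivWithinAt
  have hii : IntervalIntegrable g volume 0 μ :=
    (intervalIntegrable_iff_integrableOn_Ioc_of_le hμ.le).2 hgint
  have hFTC := intervalIntegral.integral_eq_sub_of_hasDeriv_right_of_le hμ.le hcontF hderiv hii
  have hIoo : ∫ t in Set.Ioo (0:ℝ) μ, g t = ∫ t in Set.Ioc (0:ℝ) μ, g t :=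
    (integral_Ioc_eq_integral_Ioo).symm
  rw [hIoo, ← intervalIntegral.integral_of_le hμ.le, hFTC]
  -- now compute Fa μ μ - Fa μ 0
  have h2μ : Real.sqrt (μ + μ) = Real.sqrt 2 * Real.sqrt μ := by
    rw [show μ + μ = 2*μ by ring, Real.sqrt_mul (by norm_num : (0:ℝ) ≤ 2) μ]
  have hs2 : (0:ℝ) < Real.sqrt 2 := Real.sqrt_pos.2 (by norm_num)
  have hlog1 : Real.log (Real.sqrt 2 * Real.sqrt μ + Real.sqrt μ)
      = Real.log (1 + Real.sqrt 2) + Real.log (Real.sqrt μ) := by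
    have : Real.sqrt 2 * Real.sqrt μ + Real.sqrt μ = (1 + Real.sqrt 2) * Real.sqrt μ := by ring
    rw [this, Real.log_mul (by positivity) hm0.ne']
  have hlog2 : Real.log (Real.sqrt μ + Real.sqrt μ) = Real.log 2 + Real.log (Real.sqrt μ) := by
    have : Real.sqrt μ + Real.sqrt μ = 2 * Real.sqrt μ := by ring
    rw [this, Real.log_mul (by norm_num) hm0.ne']
  have hlog4 : Real.log 4 = 2 * Real.log 2 := by
    rw [show (4:ℝ) = 2^2 by norm_num, Real.log_pow]; push_cast; ring
  unfold Fa
  simp only [sub_self, add_zero, sub_zero, Real.sqrt_zero]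
  rw [h2μ, hlog1, hlog2, hlog4]
  ring


lemma abs_Ups_le (T δ t : ℝ) : |Ups T δ t| ≤ 1 := by
  have h1 : (0:ℝ) < 1 + Real.exp ((t + δ)/T) := by positivity
  have h2 : (0:ℝ) < 1 + Real.exp ((t - δ)/T) := by positivity
  have h1' : (1 + Real.exp ((t + δ)/T))⁻¹ ≤ 1 := by
    rw [inv_le_one_iff₀]; right; nlinarith [Real.exp_pos ((t + δ)/T)]
  have h2' : (1 + Real.exp ((t - δ)/T))⁻¹ ≤ 1 := by
    rw [inv_le_one_iff₀]; right; nlinarith [Real.exp_pos ((t - δ)/T)]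
  have h1'' : (0:ℝ) < (1 + Real.exp ((t + δ)/T))⁻¹ := by positivity
  have h2'' : (0:ℝ) < (1 + Real.exp ((t - δ)/T))⁻¹ := by positivity
  rw [abs_le]; unfold Ups; constructor <;> nlinarith

lemma Ups_tendsto {T δ : ℕ → ℝ} (hT : ∀ n, 0 < T n)
    (hT0 : Tendsto T atTop (𝓝 0)) (hδ0 : Tendsto δ atTop (𝓝 0))
    {t : ℝ} (ht : 0 < t) :
    Tendsto (fun n => Ups (T n) (δ n) t) atTop (𝓝 1) := by
  have hTinv : Tendsto (fun n => (T n)⁻¹) atTop atTop := by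
    apply tendsto_inv_nhdsGT_zero.comp
    exact tendsto_nhdsWithin_of_tendsto_nhds_of_eventually_within _ hT0
      (Eventually.of_forall fun n => hT n)
  have key : ∀ (s : ℕ → ℝ), Tendsto s atTop (𝓝 t) →
      Tendsto (fun n => (1 + Real.exp (s n / T n))⁻¹) atTop (𝓝 0) := by
    intro s hs
    have hdiv : Tendsto (fun n => s n / T n) atTop atTop := by
      simp only [div_eq_mul_inv]
      exact Tendsto.pos_mul_atTop ht hs hTinv
    have hexp : Tendsto (fun n => Real.exp (s n / T n)) atTop atTop :=
      Real.tendsto_exp_atTop.comp hdiv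
    have h1 : Tendsto (fun n => 1 + Real.exp (s n / T n)) atTop atTop :=
      tendsto_atTop_add_const_left _ 1 hexp
    exact tendsto_inv_atTop_zero.comp h1
  have h1 := key (fun n => t + δ n) (by simpa using (tendsto_const_nhds.add hδ0))
  have h2 := key (fun n => t - δ n) (by simpa using (tendsto_const_nhds.sub hδ0))
  have : Tendsto (fun n => 1 - (1 + Real.exp ((t + δ n)/(T n)))⁻¹
      - (1 + Real.exp ((t - δ n)/(T n)))⁻¹) atTop (𝓝 (1 - 0 - 0)) :=
    (tendsto_const_nhds.sub h1).sub h2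
  simpa [Ups] using this

theorem inner_integral_limit'
    (μ : ℝ) (hμ : 0 < μ) (T δ : ℕ → ℝ)
    (hT : ∀ n, 0 < T n) (hδ : ∀ n, 0 ≤ δ n)
    (hT0 : Tendsto T atTop (𝓝 0)) (hδ0 : Tendsto δ atTop (𝓝 0)) :
    Tendsto (fun n => ∫ t in Set.Ioo (0:ℝ) μ,
        Ups (T n) (δ n) t * (Real.sqrt (μ + t) + Real.sqrt (μ - t) - 2 * Real.sqrt μ) / t) atTop
      (𝓝 (2 * Real.sqrt μ * (Real.log 4 - Real.log (1 + Real.sqrt 2) + Real.sqrt 2 - 2))) := by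
  have hm0 : 0 < Real.sqrt μ := Real.sqrt_pos.2 hμ
  rw [← integral_value hμ]
  have hUcont : ∀ n, Continuous (fun t => Ups (T n) (δ n) t) := by
    intro n
    unfold Ups
    have c1 : Continuous (fun t : ℝ => (1 + Real.exp ((t + δ n)/(T n)))⁻¹) :=
      Continuous.inv₀ (by fun_prop) (fun t => by positivity)
    have c2 : Continuous (fun t : ℝ => (1 + Real.exp ((t - δ n)/(T n)))⁻¹) :=
      Continuous.inv₀ (by fun_prop) (fun t => by positivity)
    exact (continuous_const.sub c1).sub c2
  apply tendsto_integral_of_dominated_convergence (fun _ => 1 / Real.sqrt μ)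
  · intro n
    exact (Measurable.div (((hUcont n).mul (by fun_prop)).measurable)
      measurable_id).aestronglyMeasurable
  · exact integrable_const _
  · intro n
    filter_upwards [ae_restrict_mem measurableSet_Ioo] with t ht
    have h1 := abs_Ups_le (T n) (δ n) t
    have h2 := abs_sqrt_bound hμ ht.1 ht.2.le
    rw [Real.norm_eq_abs, abs_div, abs_mul, abs_of_pos ht.1]
    calc |Ups (T n) (δ n) t| * |Real.sqrt (μ + t) + Real.sqrt (μ - t) - 2 * Real.sqrt μ| / t
        ≤ 1 * (t / Real.sqrt μ) / t := by gcongr <;> exact ht.1.le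
      _ = 1 / Real.sqrt μ := by
          rw [one_mul, div_div, mul_comm, ← div_div, div_self ht.1.ne']
  · filter_upwards [ae_restrict_mem measurableSet_Ioo] with t ht
    have := (Ups_tendsto hT hT0 hδ0 ht.1).mul_const
      ((Real.sqrt (μ + t) + Real.sqrt (μ - t) - 2 * Real.sqrt μ) / t)
    simpa [mul_div_assoc] using this

end Aux

/-- limit of the inner regular integral as `(T,δ) → (0,0)`. -/
theorem inner_integral_limit
    (μ : ℝ) (hμ : 0 < μ) (T δ : ℕ → ℝ)
    (hT : ∀ n, 0 < T n) (hδ : ∀ n, 0 ≤ δ n)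
    (hT0 : Tendsto T atTop (𝓝 0)) (hδ0 : Tendsto δ atTop (𝓝 0)) :
    Tendsto (fun n => ∫ t in Set.Ioo (0:ℝ) μ,
        Ups (T n) (δ n) t * (Real.sqrt (μ + t) + Real.sqrt (μ - t) - 2 * Real.sqrt μ) / t) atTop
      (𝓝 (2 * Real.sqrt μ * (Real.log 4 - Real.log (1 + Real.sqrt 2) + Real.sqrt 2 - 2))) :=
  inner_integral_limit' μ hμ T δ hT hδ hT0 hδ0
end
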